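/- arXiv:1807.02201 — 2 statements merged into one kernel-verified Lean document; each statement's English description precedes it below -/
import Mathlib

section
/- For the Abel kernel ν₀(n) = p·e^{-p}·(p+n)^{n-1}·e^{-n}/n! with p > 0, we have ν₀(n) ≤ (p/√(2π)) · n^{-3/2} for all integers n ≥ 1. -/
/-!
Since `1 + x ≤ eˣ`, `(p + n)^(n-1) ≤ n^(n-1) e^{p(n-1)/n} ≤ n^(n-1) eᵖ`, which cancels the factor
`e^{-p}`. What remains is `p · n^(n-1) e^{-n} / n!`, and Stirling's lower bound
`n! ≥ √(2πn) (n/e)ⁿ` makes this at most `p n^{-3/2} / √(2π)`.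
-/

open Real Nat

lemma add_pow_le_pow_mul_exp {a x : ℝ} (ha : 0 < a) (hax : 0 ≤ a + x) (k : ℕ) :
    (a + x) ^ k ≤ a ^ k * exp (k * x / a) := by
  have hbase : a + x ≤ a * exp (x / a) := calc
    a + x = a * (x / a + 1) := by field_simp; ring
    _ ≤ a * exp (x / a) := by gcongr; exact add_one_le_exp _
  calc (a + x) ^ k ≤ (a * exp (x / a)) ^ k := by gcongr
    _ = a ^ k * exp (k * x / a) := by rw [mul_pow, ← exp_nat_mul, mul_div_assoc]

lemma pow_pred_mul_exp_neg_div_factorial_le {n : ℕ} (hn : n ≠ 0) :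
    (n : ℝ) ^ (n - 1) * exp (-n) / n ! ≤ (n : ℝ) ^ (-(3 / 2) : ℝ) / √(2 * π) := by
  have hn0 : (0 : ℝ) < n := by positivity
  have hpow : (n : ℝ) ^ (n - 1) * exp (-n) = (n / exp 1) ^ n / n := by
    rw [div_pow, ← exp_nat_mul, mul_one, exp_neg, ← pow_sub_one_mul hn]
    field_simp
  have hrpow : (n : ℝ) ^ (-(3 / 2) : ℝ) = (n * √n)⁻¹ := by
    rw [rpow_neg hn0.le, show (3 / 2 : ℝ) = 1 + 1 / 2 by norm_num, rpow_add hn0, rpow_one,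
      sqrt_eq_rpow]
  have hstirling := Stirling.le_factorial_stirling n
  rw [hpow, hrpow, div_div, div_le_iff₀ (by positivity)]
  calc (n / exp 1 : ℝ) ^ n
      = (n * √n)⁻¹ / √(2 * π) * (n * √(2 * π * n) * (n / exp 1) ^ n) := by
        rw [sqrt_mul (by positivity) (n : ℝ)]; field_simp
    _ ≤ (n * √n)⁻¹ / √(2 * π) * (n * n !) := by rw [mul_assoc (n : ℝ)]; gcongr

theorem stmt_8 (p : ℝ) (hp : 0 < p) (n : ℕ) (hn : 1 ≤ n) :
    p * Real.exp (-p) * (p + n) ^ (n - 1) * Real.exp (-n) / (n.factorial : ℝ) ≤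
      (p / Real.sqrt (2 * Real.pi)) * (n : ℝ) ^ (-(3/2) : ℝ) := by
  have hn0 : (0 : ℝ) < n := by positivity
  have hshift : (p + n) ^ (n - 1) ≤ (n : ℝ) ^ (n - 1) * exp p := by
    rw [add_comm]
    refine (add_pow_le_pow_mul_exp hn0 (by positivity) _).trans ?_
    gcongr
    rw [div_le_iff₀ hn0, mul_comm]
    gcongr
    exact_mod_cast Nat.sub_le n 1
  calc p * exp (-p) * (p + n) ^ (n - 1) * exp (-n) / n !
      ≤ p * exp (-p) * ((n : ℝ) ^ (n - 1) * exp p) * exp (-n) / n ! := by gcongr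
    _ = p * ((n : ℝ) ^ (n - 1) * exp (-n) / n !) := by
        rw [exp_neg p]; field_simp
    _ ≤ p * ((n : ℝ) ^ (-(3 / 2) : ℝ) / √(2 * π)) :=
        mul_le_mul_of_nonneg_left (pow_pred_mul_exp_neg_div_factorial_le (by positivity)) hp.le
    _ = p / √(2 * π) * (n : ℝ) ^ (-(3 / 2) : ℝ) := by ring
end

section
/- For p > 0 and m > 0, the derivative with respect to m of θ(m) = log(m(p+m)/(p+2m)²) equals 1/V(m), where V(m) = m(1+m/p)(1+2m/p) is the Takacs variance function. -/
/-! Since `θ(m) = log m + log (p + m) - 2 log (p + 2m)`, its derivative is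
`1/m + 1/(p + m) - 4/(p + 2m) = p² / (m (p + m) (p + 2m))`, which is `1 / V(m)`. -/

open Real

theorem hasDerivAt_log_mul_add_div_add_two_mul_sq {p m : ℝ} (hm : m ≠ 0) (hpm : p + m ≠ 0)
    (hp2m : p + 2 * m ≠ 0) :
    HasDerivAt (fun x : ℝ => log (x * (p + x) / (p + 2 * x) ^ 2))
      (1 / m + 1 / (p + m) - 4 / (p + 2 * m)) m := by
  have hnum : HasDerivAt (fun x : ℝ => x * (p + x)) (p + 2 * m) m :=
    ((hasDerivAt_id' m).fun_mul ((hasDerivAt_id' m).const_add p)).congr_deriv (by ring)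
  have hden : HasDerivAt (fun x : ℝ => (p + 2 * x) ^ 2) (4 * (p + 2 * m)) m :=
    ((((hasDerivAt_id' m).const_mul 2).const_add p).fun_pow 2).congr_deriv (by push_cast; ring)
  refine ((hnum.fun_div hden (pow_ne_zero 2 hp2m)).log
    (div_ne_zero (mul_ne_zero hm hpm) (pow_ne_zero 2 hp2m))).congr_deriv ?_
  field_simp
  ring

theorem one_div_add_one_div_sub_four_div_eq_one_div_takacsVariance {p m : ℝ} (hp : p ≠ 0)
    (hm : m ≠ 0) (hpm : p + m ≠ 0) (hp2m : p + 2 * m ≠ 0) :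
    1 / m + 1 / (p + m) - 4 / (p + 2 * m) = 1 / (m * (1 + m / p) * (1 + 2 * m / p)) := by
  rw [div_add_div _ _ hm hpm, div_sub_div _ _ (mul_ne_zero hm hpm) hp2m, one_add_div hp,
    one_add_div hp]
  field_simp
  ring

theorem stmt_13 (p m : ℝ) (hp : 0 < p) (hm : 0 < m) :
    HasDerivAt (fun x : ℝ => Real.log (x * (p + x) / (p + 2 * x) ^ 2))
      (1 / (m * (1 + m / p) * (1 + 2 * m / p))) m := by
  have hpm : p + m ≠ 0 := by positivity
  have hp2m : p + 2 * m ≠ 0 := by positivity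
  rw [← one_div_add_one_div_sub_four_div_eq_one_div_takacsVariance hp.ne' hm.ne' hpm hp2m]
  exact hasDerivAt_log_mul_add_div_add_two_mul_sq hm.ne' hpm hp2m
end
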